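/- arXiv:2408.05451 — 2 statements merged into one kernel-verified Lean document; each statement's English description precedes it below -/
import Mathlib

section
/- Define round_{[−a,a]}(x) := Σ_{j=0}^{a−1} round_{[0,1]}(x − j) − Σ_{j=0}^{a−1} round_{[0,1]}(−x − j), where round_{[0,1]}(x) = 3(ReLU(x − 1/3) − ReLU(x − 2/3)) and a ∈ ℕ. Then: (i) round_{[−a,a]}(x) ∈ [−a, a] for all x ∈ ℝ; and (ii) for every integer n with |n| ≤ a and every real ε with |ε| < 1/3, round_{[−a,a]}(n + ε) = n. -/
/-- round_{[0,1]}(x) := 3(ReLU(x−1/3) − ReLU(x−2/3)). -/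
noncomputable def round01 (x : ℝ) : ℝ := 3 * (max 0 (x - 1/3) - max 0 (x - 2/3))

/-- round_{[−a,a]}(x) := Σ_{j<a} round_{[0,1]}(x−j) − Σ_{j<a} round_{[0,1]}(−x−j). -/
noncomputable def roundSym (a : ℕ) (x : ℝ) : ℝ :=
  (∑ j ∈ Finset.range a, round01 (x - j)) - ∑ j ∈ Finset.range a, round01 (-x - j)

lemma round01_nonneg (x : ℝ) : 0 ≤ round01 x := by
  unfold round01
  have : max 0 (x - 2/3) ≤ max 0 (x - 1/3) := max_le_max le_rfl (by linarith)
  linarith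

lemma round01_le_one (x : ℝ) : round01 x ≤ 1 := by
  unfold round01
  rcases le_total x (1/3) with h | h
  · rw [max_eq_left (by linarith)]
    have : 0 ≤ max 0 (x - 2/3) := le_max_left _ _
    linarith
  · rw [max_eq_right (by linarith : (0:ℝ) ≤ x - 1/3)]
    have : x - 2/3 ≤ max 0 (x - 2/3) := le_max_right _ _
    linarith

lemma round01_eq_zero {x : ℝ} (h : x ≤ 1/3) : round01 x = 0 := by
  unfold round01
  rw [max_eq_left (by linarith), max_eq_left (by linarith)]
  ring

lemma round01_eq_one {x : ℝ} (h : 2/3 ≤ x) : round01 x = 1 := by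
  unfold round01
  rw [max_eq_right (by linarith : (0:ℝ) ≤ x - 1/3),
      max_eq_right (by linarith : (0:ℝ) ≤ x - 2/3)]
  ring

lemma roundSym_neg (a : ℕ) (x : ℝ) : roundSym a (-x) = -roundSym a x := by
  unfold roundSym
  simp [neg_neg]

lemma roundSym_nonneg_eq (a : ℕ) (n : ℤ) (hn0 : 0 ≤ n) (hna : n ≤ (a : ℤ))
    (ε : ℝ) (hε : |ε| < 1/3) : roundSym a ((n : ℝ) + ε) = n := by
  obtain ⟨m, rfl⟩ := Int.eq_ofNat_of_zero_le hn0
  push_cast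
  have hma : m ≤ a := by exact_mod_cast hna
  have hε1 : -(1/3) < ε := neg_lt_of_abs_lt hε
  have hε2 : ε < 1/3 := lt_of_abs_lt hε
  unfold roundSym
  have h2 : ∀ j ∈ Finset.range a, round01 (-((m : ℝ) + ε) - j) = 0 := by
    intro j _
    apply round01_eq_zero
    have : (0:ℝ) ≤ m := by positivity
    have : (0:ℝ) ≤ j := by positivity
    linarith
  rw [Finset.sum_eq_zero h2, sub_zero]
  have hsplit : Finset.range a = Finset.range m ∪ Finset.Ico m a := by
    rw [Finset.range_eq_Ico, Finset.range_eq_Ico,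
      Finset.Ico_union_Ico_eq_Ico (Nat.zero_le m) hma]
  rw [hsplit, Finset.sum_union (by
    rw [Finset.range_eq_Ico]; exact Finset.Ico_disjoint_Ico_consecutive 0 m a)]
  have h3 : ∀ j ∈ Finset.range m, round01 ((m : ℝ) + ε - j) = 1 := by
    intro j hj
    apply round01_eq_one
    have hjm : (j : ℝ) + 1 ≤ m := by exact_mod_cast Finset.mem_range.mp hj
    linarith
  have h4 : ∀ j ∈ Finset.Ico m a, round01 ((m : ℝ) + ε - j) = 0 := by
    intro j hj
    apply round01_eq_zero
    have : (m : ℝ) ≤ j := by exact_mod_cast (Finset.mem_Ico.mp hj).1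
    linarith
  rw [Finset.sum_congr rfl h3, Finset.sum_eq_zero h4]
  simp

/-- The staircase function round_{[−a,a]} is bounded by a in absolute value, and
rounds any real within 1/3 of an integer n with |n| ≤ a to n. -/
theorem roundSym_props (a : ℕ) :
    (∀ x : ℝ, |roundSym a x| ≤ a) ∧
    (∀ n : ℤ, |n| ≤ (a : ℤ) → ∀ ε : ℝ, |ε| < 1/3 → roundSym a ((n : ℝ) + ε) = n) := by
  constructor
  · intro x
    have hb : ∀ y : ℝ, 0 ≤ ∑ j ∈ Finset.range a, round01 (y - j) ∧
        (∑ j ∈ Finset.range a, round01 (y - j)) ≤ a := by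
      intro y
      constructor
      · exact Finset.sum_nonneg fun j _ => round01_nonneg _
      · calc (∑ j ∈ Finset.range a, round01 (y - j)) ≤ ∑ j ∈ Finset.range a, 1 :=
              Finset.sum_le_sum fun j _ => round01_le_one _
          _ = a := by simp
    obtain ⟨h1, h2⟩ := hb x
    obtain ⟨h3, h4⟩ := hb (-x)
    rw [abs_le]
    unfold roundSym
    constructor <;> linarith
  · intro n hn ε hε
    rcases le_or_gt 0 n with h0 | h0
    · exact roundSym_nonneg_eq a n h0 (le_of_abs_le hn) ε hε
    · have h1 : |(-n)| ≤ (a : ℤ) := by rwa [abs_neg]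
      have := roundSym_nonneg_eq a (-n) (by omega) (le_of_abs_le h1) (-ε)
        (by rwa [abs_neg])
      have hx : ((-n : ℤ) : ℝ) + (-ε) = -((n : ℝ) + ε) := by push_cast; ring
      rw [hx, roundSym_neg] at this
      push_cast at this ⊢
      linarith
end

section
/- Let X, Y be independent standard Gaussians and Z an independent centered Gaussian with variance σ² ≥ 1. Define E₀ = E[σ(X)σ(Y)·ReLU(X + Y + Z)] where σ is the sign function. Then E₀ > 0; moreover E₀ ≥ 2·P(X ∈ [1/2, 1])·P(Y ≥ 2)·P(|Z| ≤ 1), which is bounded below by c/σ for an absolute constant c > 0. -/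
open MeasureTheory ProbabilityTheory Real
open scoped NNReal ENNReal

namespace SignReluAux

noncomputable def g (p : ℝ × ℝ × ℝ) : ℝ :=
  Real.sign p.1 * Real.sign p.2.1 * max 0 (p.1 + p.2.1 + p.2.2)

noncomputable def h (x y z : ℝ) : ℝ :=
  max 0 (x + y + z) - max 0 (-x + y + z) - max 0 (x + -y + z) + max 0 (-x + -y + z)

lemma measurable_realSign : Measurable Real.sign := by
  have hdef : Real.sign = fun r : ℝ => if r < 0 then (-1 : ℝ) else if 0 < r then 1 else 0 := by
    funext r; rfl
  rw [hdef]
  exact Measurable.ite (measurableSet_lt measurable_id measurable_const) measurable_const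
    (Measurable.ite (measurableSet_lt measurable_const measurable_id) measurable_const
      measurable_const)

lemma measurable_g : Measurable g := by
  unfold g
  exact ((measurable_realSign.comp measurable_fst).mul
      (measurable_realSign.comp (measurable_fst.comp measurable_snd))).mul
    (measurable_const.max ((measurable_fst.add (measurable_fst.comp measurable_snd)).add
      (measurable_snd.comp measurable_snd)))

lemma abs_sign_le (x : ℝ) : |Real.sign x| ≤ 1 := by
  rcases Real.sign_apply_eq x with hs | hs | hs <;> rw [hs] <;> norm_num

lemma h_nonneg {x y : ℝ} (hx : 0 ≤ x) (hy : 0 ≤ y) (z : ℝ) : 0 ≤ h x y z := by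
  simp only [h, max_def]
  split_ifs <;> linarith

lemma h_odd_x (x y z : ℝ) : h (-x) y z = -(h x y z) := by
  simp only [h, neg_neg]; ring

lemma h_odd_y (x y z : ℝ) : h x (-y) z = -(h x y z) := by
  simp only [h, neg_neg]; ring

lemma h_eq₁ {x y z : ℝ} (hx : 0 ≤ x) (hxy : x + |z| ≤ y) : h x y z = 2 * x := by
  have h1 := le_abs_self z
  have h2 := neg_abs_le z
  simp only [h, max_def]
  split_ifs <;> linarith

lemma h_eq₂ {x y z : ℝ} (hy : 0 ≤ y) (hxy : y + |z| ≤ x) : h x y z = 2 * y := by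
  have h1 := le_abs_self z
  have h2 := neg_abs_le z
  simp only [h, max_def]
  split_ifs <;> linarith

lemma sum_eq (x y z : ℝ) :
    Real.sign x * Real.sign y * max 0 (x + y + z)
      + Real.sign (-x) * Real.sign y * max 0 (-x + y + z)
      + Real.sign x * Real.sign (-y) * max 0 (x + -y + z)
      + Real.sign (-x) * Real.sign (-y) * max 0 (-x + -y + z)
    = Real.sign x * Real.sign y * h x y z := by
  simp only [h, Real.sign_neg]; ring

lemma key_nonneg (x y z : ℝ) : 0 ≤ Real.sign x * Real.sign y * h x y z := by
  rcases lt_trichotomy x 0 with hx | hx | hx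
  · rcases lt_trichotomy y 0 with hy | hy | hy
    · have h0 : 0 ≤ h (-x) (-y) z := h_nonneg (by linarith) (by linarith) z
      rw [h_odd_x, h_odd_y] at h0
      rw [Real.sign_of_neg hx, Real.sign_of_neg hy]
      linarith
    · rw [hy, Real.sign_zero]; simp
    · have h0 : 0 ≤ h (-x) y z := h_nonneg (by linarith) (by linarith) z
      rw [h_odd_x] at h0
      rw [Real.sign_of_neg hx, Real.sign_of_pos hy]
      linarith
  · rw [hx, Real.sign_zero]; simp
  · rcases lt_trichotomy y 0 with hy | hy | hy
    · have h0 : 0 ≤ h x (-y) z := h_nonneg (by linarith) (by linarith) z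
      rw [h_odd_y] at h0
      rw [Real.sign_of_pos hx, Real.sign_of_neg hy]
      linarith
    · rw [hy, Real.sign_zero]; simp
    · have h0 : 0 ≤ h x y z := h_nonneg (by linarith) (by linarith) z
      rw [Real.sign_of_pos hx, Real.sign_of_pos hy]
      linarith

lemma key_ge₁ {x y z : ℝ} (hx1 : 1/2 ≤ |x|) (hx2 : |x| ≤ 1) (hy : 2 ≤ |y|) (hz : |z| ≤ 1) :
    1 ≤ Real.sign x * Real.sign y * h x y z := by
  have hxne : x ≠ 0 := by intro h0; rw [h0] at hx1; simp at hx1; linarith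
  have hyne : y ≠ 0 := by intro h0; rw [h0] at hy; simp at hy; linarith
  rcases hxne.lt_or_gt with hxn | hxp
  · have hax : |x| = -x := abs_of_neg hxn
    rcases hyne.lt_or_gt with hyn | hyp
    · have hay : |y| = -y := abs_of_neg hyn
      have e : h (-x) (-y) z = 2 * (-x) := h_eq₁ (by linarith) (by linarith)
      rw [h_odd_x, h_odd_y, neg_neg] at e
      rw [Real.sign_of_neg hxn, Real.sign_of_neg hyn]
      linarith
    · have hay : |y| = y := abs_of_pos hyp
      have e : h (-x) y z = 2 * (-x) := h_eq₁ (by linarith) (by linarith)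
      rw [h_odd_x] at e
      rw [Real.sign_of_neg hxn, Real.sign_of_pos hyp]
      linarith
  · have hax : |x| = x := abs_of_pos hxp
    rcases hyne.lt_or_gt with hyn | hyp
    · have hay : |y| = -y := abs_of_neg hyn
      have e : h x (-y) z = 2 * x := h_eq₁ (by linarith) (by linarith)
      rw [h_odd_y] at e
      rw [Real.sign_of_pos hxp, Real.sign_of_neg hyn]
      linarith
    · have hay : |y| = y := abs_of_pos hyp
      have e : h x y z = 2 * x := h_eq₁ (by linarith) (by linarith)
      rw [Real.sign_of_pos hxp, Real.sign_of_pos hyp]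
      linarith

lemma key_ge₂ {x y z : ℝ} (hy1 : 1/2 ≤ |y|) (hy2 : |y| ≤ 1) (hx : 2 ≤ |x|) (hz : |z| ≤ 1) :
    1 ≤ Real.sign x * Real.sign y * h x y z := by
  have hxne : x ≠ 0 := by intro h0; rw [h0] at hx; simp at hx; linarith
  have hyne : y ≠ 0 := by intro h0; rw [h0] at hy1; simp at hy1; linarith
  rcases hxne.lt_or_gt with hxn | hxp
  · have hax : |x| = -x := abs_of_neg hxn
    rcases hyne.lt_or_gt with hyn | hyp
    · have hay : |y| = -y := abs_of_neg hyn
      have e : h (-x) (-y) z = 2 * (-y) := h_eq₂ (by linarith) (by linarith)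
      rw [h_odd_x, h_odd_y, neg_neg] at e
      rw [Real.sign_of_neg hxn, Real.sign_of_neg hyn]
      linarith
    · have hay : |y| = y := abs_of_pos hyp
      have e : h (-x) y z = 2 * y := h_eq₂ (by linarith) (by linarith)
      rw [h_odd_x] at e
      rw [Real.sign_of_neg hxn, Real.sign_of_pos hyp]
      linarith
  · have hax : |x| = x := abs_of_pos hxp
    rcases hyne.lt_or_gt with hyn | hyp
    · have hay : |y| = -y := abs_of_neg hyn
      have e : h x (-y) z = 2 * (-y) := h_eq₂ (by linarith) (by linarith)
      rw [h_odd_y] at e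
      rw [Real.sign_of_pos hxp, Real.sign_of_neg hyn]
      linarith
    · have hay : |y| = y := abs_of_pos hyp
      have e : h x y z = 2 * y := h_eq₂ (by linarith) (by linarith)
      rw [Real.sign_of_pos hxp, Real.sign_of_pos hyp]
      linarith

/-- Negation in the first coordinate. -/
def negFst : (ℝ × ℝ × ℝ) ≃ᵐ (ℝ × ℝ × ℝ) where
  toEquiv := ⟨fun p => (-p.1, p.2), fun p => (-p.1, p.2),
    fun p => by simp, fun p => by simp⟩
  measurable_toFun := measurable_fst.neg.prodMk measurable_snd
  measurable_invFun := measurable_fst.neg.prodMk measurable_snd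

/-- Negation in the second coordinate. -/
def negSnd : (ℝ × ℝ × ℝ) ≃ᵐ (ℝ × ℝ × ℝ) where
  toEquiv := ⟨fun p => (p.1, (-p.2.1, p.2.2)), fun p => (p.1, (-p.2.1, p.2.2)),
    fun p => by simp, fun p => by simp⟩
  measurable_toFun := measurable_fst.prodMk
    (((measurable_fst.comp measurable_snd).neg).prodMk (measurable_snd.comp measurable_snd))
  measurable_invFun := measurable_fst.prodMk
    (((measurable_fst.comp measurable_snd).neg).prodMk (measurable_snd.comp measurable_snd))

lemma map_neg_gaussian (v : ℝ≥0) :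
    Measure.map (fun x : ℝ => -x) (gaussianReal 0 v) = gaussianReal 0 v := by
  have h := gaussianReal_map_const_mul (μ := 0) (v := v) (-1)
  have h1 : (NNReal.mk ((-1 : ℝ) ^ 2) (sq_nonneg _)) = 1 := by ext; norm_num
  rw [h1, one_mul] at h
  simp only [neg_one_mul, mul_zero] at h
  convert h using 2

lemma mp_neg (v : ℝ≥0) :
    MeasurePreserving (fun x : ℝ => -x) (gaussianReal 0 v) (gaussianReal 0 v) :=
  ⟨measurable_neg, map_neg_gaussian v⟩

lemma integrable_id_gaussian (v : ℝ≥0) : Integrable (fun x : ℝ => x) (gaussianReal 0 v) := by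
  by_cases hv : v = 0
  · subst hv
    rw [gaussianReal_zero_var]
    exact (integrable_const (0 : ℝ)).congr (ae_eq_dirac (fun x : ℝ => x)).symm
  · have hvpos : (0 : ℝ) < (v : ℝ) := by positivity
    have hb : (0 : ℝ) < ((2 : ℝ) * (v : ℝ))⁻¹ := by positivity
    rw [gaussianReal_of_var_ne_zero _ hv]
    refine (integrable_withDensity_iff (measurable_gaussianPDF 0 v)
      (ae_of_all _ fun x => ENNReal.ofReal_lt_top) (g := fun x : ℝ => x)).mpr ?_
    have heq : (fun x : ℝ => x * (gaussianPDF 0 v x).toReal)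
        = fun x : ℝ => (√(2 * π * (v : ℝ)))⁻¹ * (x * rexp (-((2 : ℝ) * (v : ℝ))⁻¹ * x ^ 2)) := by
      funext x
      rw [gaussianPDF_def, ENNReal.toReal_ofReal (gaussianPDFReal_nonneg _ _ _), gaussianPDFReal]
      rw [sub_zero]
      rw [show -x ^ 2 / (2 * (v : ℝ)) = -((2 : ℝ) * (v : ℝ))⁻¹ * x ^ 2 by field_simp]
      ring
    rw [heq]
    exact (integrable_mul_exp_neg_mul_sq hb).const_mul _

lemma integrable_comp_equiv {μ : Measure (ℝ × ℝ × ℝ)} {f : (ℝ × ℝ × ℝ) ≃ᵐ (ℝ × ℝ × ℝ)}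
    (hf : MeasurePreserving f μ μ) {g : ℝ × ℝ × ℝ → ℝ} (hg : Integrable g μ) :
    Integrable (fun p => g (f p)) μ := by
  have h := integrable_map_measure (μ := μ) (f := ⇑f) (g := g)
    (by rw [hf.map_eq]; exact hg.aestronglyMeasurable) f.measurable.aemeasurable
  rw [hf.map_eq] at h
  exact h.mp hg

lemma integrable_fst_comp {α β : Type*} [MeasurableSpace α] [MeasurableSpace β]
    {ν : Measure α} {ρ : Measure β} [SFinite ν] [IsProbabilityMeasure ρ] {f : α → ℝ}
    (hf : Integrable f ν) :
    Integrable (fun p : α × β => f p.1) (ν.prod ρ) := by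
  have hmap : (ν.prod ρ).map Prod.fst = ν := by
    rw [Measure.map_fst_prod]; simp
  have h := integrable_map_measure (μ := ν.prod ρ) (f := Prod.fst) (g := f)
    (by rw [hmap]; exact hf.aestronglyMeasurable) measurable_fst.aemeasurable
  rw [hmap] at h
  exact h.mp hf

lemma integrable_snd_comp {α β : Type*} [MeasurableSpace α] [MeasurableSpace β]
    {ν : Measure α} {ρ : Measure β} [IsProbabilityMeasure ν] [SFinite ρ] {f : β → ℝ}
    (hf : Integrable f ρ) :
    Integrable (fun p : α × β => f p.2) (ν.prod ρ) := by
  have hmap : (ν.prod ρ).map Prod.snd = ρ := by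
    rw [Measure.map_snd_prod]; simp
  have h := integrable_map_measure (μ := ν.prod ρ) (f := Prod.snd) (g := f)
    (by rw [hmap]; exact hf.aestronglyMeasurable) measurable_snd.aemeasurable
  rw [hmap] at h
  exact h.mp hf

lemma abs_mem₁ {x : ℝ} (hx : x ∈ Set.Icc (-1 : ℝ) (-(1/2)) ∪ Set.Icc (1/2 : ℝ) 1) :
    1/2 ≤ |x| ∧ |x| ≤ 1 := by
  rcases hx with ⟨h1, h2⟩ | ⟨h1, h2⟩
  · rw [abs_of_neg (by linarith)]; constructor <;> linarith
  · rw [abs_of_pos (by linarith)]; constructor <;> linarith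

lemma abs_mem₂ {y : ℝ} (hy : y ∈ Set.Iic (-2 : ℝ) ∪ Set.Ici (2 : ℝ)) : 2 ≤ |y| := by
  rcases hy with h1 | h1
  · simp only [Set.mem_Iic] at h1; rw [abs_of_neg (by linarith)]; linarith
  · simp only [Set.mem_Ici] at h1; rw [abs_of_pos (by linarith)]; linarith

end SignReluAux

open SignReluAux

set_option maxHeartbeats 1000000 in
open MeasureTheory ProbabilityTheory in
/-- For X, Y independent standard Gaussians and Z an independent centered Gaussian of
variance σ² with σ ≥ 1, the mean E₀ = E[sign(X)sign(Y)ReLU(X+Y+Z)] is positive, is at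
least 2·P(X ∈ [1/2,1])·P(Y ≥ 2)·P(|Z| ≤ 1), and is bounded below by c/σ for an
absolute constant c > 0. -/
theorem sign_relu_mean_positive :
    ∃ c : ℝ, 0 < c ∧ ∀ σ : NNReal, 1 ≤ σ →
      let μ : Measure (ℝ × ℝ × ℝ) :=
        (gaussianReal 0 1).prod ((gaussianReal 0 1).prod (gaussianReal 0 (σ ^ 2)))
      let E₀ : ℝ :=
        ∫ p : ℝ × ℝ × ℝ, Real.sign p.1 * Real.sign p.2.1 * max 0 (p.1 + p.2.1 + p.2.2) ∂μ
      0 < E₀ ∧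
      2 * ((gaussianReal 0 1) (Set.Icc (1/2 : ℝ) 1)).toReal
          * ((gaussianReal 0 1) {y : ℝ | 2 ≤ y}).toReal
          * ((gaussianReal 0 (σ ^ 2)) {z : ℝ | |z| ≤ 1}).toReal ≤ E₀ ∧
      c / σ ≤ E₀ := by
  classical
  set ν : Measure ℝ := gaussianReal 0 1 with hν
  set P1 : ℝ := ((gaussianReal 0 1) (Set.Icc (1/2 : ℝ) 1)).toReal with hP1
  set P2 : ℝ := ((gaussianReal 0 1) {y : ℝ | 2 ≤ y}).toReal with hP2
  have hP1pos : 0 < P1 := by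
    refine ENNReal.toReal_pos (fun h0 => ?_) (measure_ne_top _ _)
    have hvol := gaussianReal_absolutelyContinuous' 0 one_ne_zero h0
    rw [Real.volume_Icc] at hvol
    rw [ENNReal.ofReal_eq_zero] at hvol
    norm_num at hvol
  have hP2pos : 0 < P2 := by
    refine ENNReal.toReal_pos (fun h0 => ?_) (measure_ne_top _ _)
    have hvol := gaussianReal_absolutelyContinuous' 0 one_ne_zero h0
    rw [show {y : ℝ | 2 ≤ y} = Set.Ici (2 : ℝ) from rfl, Real.volume_Ici] at hvol
    exact ENNReal.top_ne_zero hvol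
  set K : ℝ := 2 * Real.exp (-(1/2)) / Real.sqrt (2 * Real.pi) with hK
  have hKpos : 0 < K := by
    have : (0:ℝ) < Real.sqrt (2 * Real.pi) := Real.sqrt_pos.mpr (by positivity)
    positivity
  refine ⟨2 * P1 * P2 * K, by positivity, ?_⟩
  intro σ hσ
  intro μ E₀
  have hσR : (1 : ℝ) ≤ (σ : ℝ) := by exact_mod_cast hσ
  have hσpos : (0 : ℝ) < (σ : ℝ) := by linarith
  have hσne : σ ≠ 0 := by
    intro h0; rw [h0] at hσ; exact absurd hσ (by norm_num)
  have hv : (σ ^ 2 : ℝ≥0) ≠ 0 := pow_ne_zero 2 hσne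
  set ν3 : Measure ℝ := gaussianReal 0 (σ ^ 2) with hν3
  have hE0 : E₀ = ∫ p, g p ∂μ := rfl
  -- integrability
  have i3' : Integrable (fun q : ℝ × ℝ => q.2) (ν.prod ν3) :=
    integrable_snd_comp (integrable_id_gaussian _)
  have i2' : Integrable (fun q : ℝ × ℝ => q.1) (ν.prod ν3) :=
    integrable_fst_comp (integrable_id_gaussian _)
  have i1 : Integrable (fun p : ℝ × ℝ × ℝ => p.1) μ :=
    integrable_fst_comp (integrable_id_gaussian _)
  have i2 : Integrable (fun p : ℝ × ℝ × ℝ => p.2.1) μ := integrable_snd_comp i2'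
  have i3 : Integrable (fun p : ℝ × ℝ × ℝ => p.2.2) μ := integrable_snd_comp i3'
  have hg_int : Integrable g μ := by
    have hbound : Integrable (fun p : ℝ × ℝ × ℝ => |p.1| + |p.2.1| + |p.2.2|) μ :=
      (i1.abs.add i2.abs).add i3.abs
    refine hbound.mono' measurable_g.aestronglyMeasurable (ae_of_all _ fun p => ?_)
    rw [Real.norm_eq_abs]
    have hm : |max 0 (p.1 + p.2.1 + p.2.2)| ≤ |p.1 + p.2.1 + p.2.2| := by
      rw [abs_of_nonneg (le_max_left _ _)]
      exact max_le (abs_nonneg _) (le_abs_self _)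
    have hsum : |p.1 + p.2.1 + p.2.2| ≤ |p.1| + |p.2.1| + |p.2.2| := by
      have h1 := abs_add_le (p.1 + p.2.1) p.2.2
      have h2 := abs_add_le p.1 p.2.1
      linarith
    have hgabs : |g p| ≤ |max 0 (p.1 + p.2.1 + p.2.2)| := by
      unfold g
      rw [abs_mul, abs_mul]
      have h12 : |Real.sign p.1| * |Real.sign p.2.1| ≤ 1 :=
        mul_le_one₀ (abs_sign_le _) (abs_nonneg _) (abs_sign_le _)
      calc |Real.sign p.1| * |Real.sign p.2.1| * |max 0 (p.1 + p.2.1 + p.2.2)|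
          ≤ 1 * |max 0 (p.1 + p.2.1 + p.2.2)| :=
            mul_le_mul_of_nonneg_right h12 (abs_nonneg _)
        _ = |max 0 (p.1 + p.2.1 + p.2.2)| := one_mul _
    linarith
  -- measure preserving maps
  have hmp1 : MeasurePreserving (⇑negFst) μ μ := by
    have hfun : ⇑negFst = Prod.map (fun x : ℝ => -x) (id : ℝ × ℝ → ℝ × ℝ) := by
      funext p; rfl
    rw [hfun]
    exact (mp_neg 1).prod (MeasurePreserving.id _)
  have hmp2 : MeasurePreserving (⇑negSnd) μ μ := by
    have hfun : ⇑negSnd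
        = Prod.map (id : ℝ → ℝ) (Prod.map (fun y : ℝ => -y) (id : ℝ → ℝ)) := by
      funext p; rfl
    rw [hfun]
    exact (MeasurePreserving.id _).prod ((mp_neg 1).prod (MeasurePreserving.id _))
  have hint1 : Integrable (fun p => g (negFst p)) μ := integrable_comp_equiv hmp1 hg_int
  have hint2 : Integrable (fun p => g (negSnd p)) μ := integrable_comp_equiv hmp2 hg_int
  have hint12 : Integrable (fun p => g (negFst (negSnd p))) μ :=
    integrable_comp_equiv hmp2 hint1
  have hI1 : ∫ p, g (negFst p) ∂μ = E₀ := hmp1.integral_comp' g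
  have hI2 : ∫ p, g (negSnd p) ∂μ = E₀ := hmp2.integral_comp' g
  have hI12 : ∫ p, g (negFst (negSnd p)) ∂μ = E₀ := by
    rw [hmp2.integral_comp' (fun q => g (negFst q))]
    exact hI1
  have hGint : Integrable
      (fun p => g p + g (negFst p) + g (negSnd p) + g (negFst (negSnd p))) μ :=
    ((hg_int.add hint1).add hint2).add hint12
  have hGsum : ∫ p, (g p + g (negFst p) + g (negSnd p) + g (negFst (negSnd p))) ∂μ
      = 4 * E₀ := by
    have e1 : ∫ p, (g p + g (negFst p) + g (negSnd p) + g (negFst (negSnd p))) ∂μ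
        = (∫ p, (g p + g (negFst p) + g (negSnd p)) ∂μ) + ∫ p, g (negFst (negSnd p)) ∂μ :=
      integral_add ((hg_int.add hint1).add hint2) hint12
    have e2 : ∫ p, (g p + g (negFst p) + g (negSnd p)) ∂μ
        = (∫ p, (g p + g (negFst p)) ∂μ) + ∫ p, g (negSnd p) ∂μ :=
      integral_add (hg_int.add hint1) hint2
    have e3 : ∫ p, (g p + g (negFst p)) ∂μ = (∫ p, g p ∂μ) + ∫ p, g (negFst p) ∂μ :=
      integral_add hg_int hint1
    rw [e1, e2, e3, hI1, hI2, hI12, ← hE0]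
    ring
  -- sets
  set S1 : Set ℝ := Set.Icc (-1 : ℝ) (-(1/2)) ∪ Set.Icc (1/2 : ℝ) 1 with hS1
  set S2 : Set ℝ := Set.Iic (-2 : ℝ) ∪ Set.Ici (2 : ℝ) with hS2
  set S3 : Set ℝ := {z : ℝ | |z| ≤ 1} with hS3
  have hS3eq : S3 = Set.Icc (-1 : ℝ) 1 := by
    ext z; simp [hS3, abs_le]
  have hS1m : MeasurableSet S1 := measurableSet_Icc.union measurableSet_Icc
  have hS2m : MeasurableSet S2 := measurableSet_Iic.union measurableSet_Ici
  have hS3m : MeasurableSet S3 := by rw [hS3eq]; exact measurableSet_Icc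
  set A : Set (ℝ × ℝ × ℝ) := S1 ×ˢ (S2 ×ˢ S3) with hA
  set A' : Set (ℝ × ℝ × ℝ) := S2 ×ˢ (S1 ×ˢ S3) with hA'
  have hAm : MeasurableSet A := hS1m.prod (hS2m.prod hS3m)
  have hA'm : MeasurableSet A' := hS2m.prod (hS1m.prod hS3m)
  have hdisj : Disjoint A A' := by
    rw [Set.disjoint_left]
    rintro ⟨x, y, z⟩ hmemA hmemA'
    have h1 := abs_mem₁ hmemA.1
    have h2 := abs_mem₂ hmemA'.1
    linarith [h1.2]
  -- pointwise bounds
  have hGnn : ∀ p : ℝ × ℝ × ℝ,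
      0 ≤ g p + g (negFst p) + g (negSnd p) + g (negFst (negSnd p)) := fun p =>
    (key_nonneg p.1 p.2.1 p.2.2).trans_eq (sum_eq p.1 p.2.1 p.2.2).symm
  have hGge : ∀ p ∈ A ∪ A',
      1 ≤ g p + g (negFst p) + g (negSnd p) + g (negFst (negSnd p)) := by
    rintro p (hp | hp)
    · have h1 := abs_mem₁ hp.1
      have h2 := abs_mem₂ hp.2.1
      have h3 : |p.2.2| ≤ 1 := hp.2.2
      exact (key_ge₁ h1.1 h1.2 h2 h3).trans_eq (sum_eq p.1 p.2.1 p.2.2).symm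
    · have h1 := abs_mem₂ hp.1
      have h2 := abs_mem₁ hp.2.1
      have h3 : |p.2.2| ≤ 1 := hp.2.2
      exact (key_ge₂ h2.1 h2.2 h1 h3).trans_eq (sum_eq p.1 p.2.1 p.2.2).symm
  have hind : ∀ p, (A ∪ A').indicator (fun _ => (1 : ℝ)) p
      ≤ g p + g (negFst p) + g (negSnd p) + g (negFst (negSnd p)) := fun p => by
    by_cases hp : p ∈ A ∪ A'
    · rw [Set.indicator_of_mem hp]; exact hGge p hp
    · rw [Set.indicator_of_notMem hp]; exact hGnn p
  have hIndInt : Integrable ((A ∪ A').indicator fun _ => (1 : ℝ)) μ :=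
    (integrable_const 1).indicator (hAm.union hA'm)
  have hmono := integral_mono hIndInt hGint hind
  rw [integral_indicator_const (1 : ℝ) (hAm.union hA'm), hGsum, smul_eq_mul, mul_one] at hmono
  -- measure of the union
  have hν1S1 : ν S1 = 2 * ν (Set.Icc (1/2 : ℝ) 1) := by
    rw [hS1, measure_union ?_ measurableSet_Icc]
    · have hpre : Set.Icc (-1 : ℝ) (-(1/2)) = (fun x : ℝ => -x) ⁻¹' Set.Icc (1/2 : ℝ) 1 := by
        ext t
        simp only [Set.mem_Icc, Set.mem_preimage]
        constructor <;> rintro ⟨ha, hb⟩ <;> constructor <;> linarith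
      rw [hpre, (mp_neg 1).measure_preimage measurableSet_Icc.nullMeasurableSet]
      rw [two_mul]
    · rw [Set.disjoint_left]
      rintro t ⟨ht1, ht2⟩ ⟨ht3, ht4⟩
      linarith
  have hν1S2 : ν S2 = 2 * ν {y : ℝ | 2 ≤ y} := by
    rw [hS2, measure_union ?_ measurableSet_Ici]
    · have hpre : Set.Iic (-2 : ℝ) = (fun x : ℝ => -x) ⁻¹' Set.Ici (2 : ℝ) := by
        ext t
        simp only [Set.mem_Iic, Set.mem_preimage, Set.mem_Ici]
        constructor <;> intro ha <;> linarith
      rw [hpre, (mp_neg 1).measure_preimage measurableSet_Ici.nullMeasurableSet]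
      rw [two_mul]
      rfl
    · rw [Set.disjoint_left]
      rintro t ht1 ht2
      simp only [Set.mem_Iic] at ht1
      simp only [Set.mem_Ici] at ht2
      linarith
  have hμUnion : μ (A ∪ A')
      = 8 * (ν (Set.Icc (1/2 : ℝ) 1) * (ν {y : ℝ | 2 ≤ y} * ν3 S3)) := by
    rw [measure_union hdisj hA'm, hA, hA']
    show (ν.prod (ν.prod ν3)) _ + (ν.prod (ν.prod ν3)) _ = _
    rw [Measure.prod_prod, Measure.prod_prod, Measure.prod_prod, Measure.prod_prod,
      hν1S1, hν1S2]
    ring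
  set P3 : ℝ := ((gaussianReal 0 (σ ^ 2)) {z : ℝ | |z| ≤ 1}).toReal with hP3
  have hμUnionReal : (μ (A ∪ A')).toReal = 8 * (P1 * (P2 * P3)) := by
    rw [hμUnion]
    rw [ENNReal.toReal_mul, ENNReal.toReal_mul, ENNReal.toReal_mul]
    norm_num [hP1, hP2, hP3]
    rfl
  rw [measureReal_def, hμUnionReal] at hmono
  -- lower bound on P3
  have hP3eq : P3 = ∫ x in Set.Icc (-1 : ℝ) 1, gaussianPDFReal 0 (σ ^ 2) x := by
    rw [hP3, show {z : ℝ | |z| ≤ 1} = Set.Icc (-1 : ℝ) 1 from hS3eq,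
      gaussianReal_apply_eq_integral 0 hv,
      ENNReal.toReal_ofReal (setIntegral_nonneg measurableSet_Icc
        fun x _ => gaussianPDFReal_nonneg _ _ _)]
  have hsqrt : Real.sqrt (2 * Real.pi * ((σ ^ 2 : ℝ≥0) : ℝ))
      = Real.sqrt (2 * Real.pi) * (σ : ℝ) := by
    rw [show ((σ ^ 2 : ℝ≥0) : ℝ) = ((σ : ℝ)) ^ 2 by push_cast; ring]
    rw [Real.sqrt_mul (by positivity), Real.sqrt_sq (by positivity)]
  have hconst : ∀ x ∈ Set.Icc (-1 : ℝ) 1,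
      (Real.sqrt (2 * Real.pi))⁻¹ * (σ : ℝ)⁻¹ * Real.exp (-(1/2))
        ≤ gaussianPDFReal 0 (σ ^ 2) x := by
    intro x hx
    rw [gaussianPDFReal, sub_zero, hsqrt, mul_inv]
    have hx2 : x ^ 2 ≤ 1 := by
      rcases hx with ⟨ha, hb⟩; nlinarith
    have hσ2 : (1 : ℝ) ≤ ((σ ^ 2 : ℝ≥0) : ℝ) := by
      rw [show ((σ ^ 2 : ℝ≥0) : ℝ) = ((σ : ℝ)) ^ 2 by push_cast; ring]
      nlinarith
    have hexp : Real.exp (-(1/2)) ≤ Real.exp (-x ^ 2 / (2 * ((σ ^ 2 : ℝ≥0) : ℝ))) := by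
      apply Real.exp_le_exp.mpr
      rw [neg_div, neg_le_neg_iff]
      rw [div_le_iff₀ (by positivity)]
      nlinarith
    have hpos : (0 : ℝ) ≤ (Real.sqrt (2 * Real.pi))⁻¹ * (σ : ℝ)⁻¹ := by positivity
    calc (Real.sqrt (2 * Real.pi))⁻¹ * (σ : ℝ)⁻¹ * Real.exp (-(1/2))
        ≤ (Real.sqrt (2 * Real.pi))⁻¹ * (σ : ℝ)⁻¹
            * Real.exp (-x ^ 2 / (2 * ((σ ^ 2 : ℝ≥0) : ℝ))) := by
          exact mul_le_mul_of_nonneg_left hexp hpos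
      _ = _ := by ring
  have hP3low : K / (σ : ℝ) ≤ P3 := by
    have hIcc : volume (Set.Icc (-1 : ℝ) 1) ≠ ⊤ := by
      rw [Real.volume_Icc]; exact ENNReal.ofReal_ne_top
    have hge := setIntegral_ge_of_const_le (μ := volume) measurableSet_Icc hIcc hconst
      ((integrable_gaussianPDFReal 0 (σ ^ 2)).integrableOn)
    have hvol : (volume (Set.Icc (-1 : ℝ) 1)).toReal = 2 := by
      rw [Real.volume_Icc]
      rw [ENNReal.toReal_ofReal (by norm_num)]
      norm_num
    rw [measureReal_def, hvol] at hge
    rw [hP3eq]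
    refine le_trans (le_of_eq ?_) hge
    rw [hK, div_div, div_eq_mul_inv]
    ring
  -- conclude
  clear_value E₀ P1 P2 P3 K
  have hmain : 2 * P1 * P2 * P3 ≤ E₀ := by
    have h8 : 8 * (P1 * (P2 * P3)) = 4 * (2 * P1 * P2 * P3) := by ring
    linarith
  have hKσpos : 0 < K / (σ : ℝ) := div_pos hKpos hσpos
  have hcσ : (2 * P1 * P2 * K) / (σ : ℝ) ≤ 2 * P1 * P2 * P3 := by
    have h1 : (2 * P1 * P2 * K) / (σ : ℝ) = 2 * P1 * P2 * (K / (σ : ℝ)) := by ring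
    rw [h1]
    exact mul_le_mul_of_nonneg_left hP3low
      (mul_nonneg (mul_nonneg (by norm_num) hP1pos.le) hP2pos.le)
  refine ⟨?_, hmain, le_trans hcσ hmain⟩
  have hP3pos : 0 < P3 := lt_of_lt_of_le hKσpos hP3low
  have hprod : 0 < 2 * P1 * P2 * P3 := mul_pos (mul_pos (mul_pos two_pos hP1pos) hP2pos) hP3pos
  linarith
end
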